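/- Let n ≥ 2 and let b_1,…,b_n ≥ 2 and c_1,…,c_n ≥ 1 be integers. If B_{n−1} ∩ C_n ∩ C_{n−1} ≠ ∅, then b_n > (1 + 1/c_n) · (c_{n−1} + 1 + [0;c_{n−2},…,c_1]) · (1 − [0;b_{n−1},…,b_1]) − 1, where [0;c_{n−2},…,c_1] and [0;b_{n−1},…,b_1] are the continued fractions of the reversed sequences. -/

import Mathlib

noncomputable section

namespace ShulgaPaper

open Filter Topology

/-- The value of the finite continued fraction `[0; a₁, …, aₙ]`
(the empty continued fraction has value `0`). -/
def cf : List ℕ → ℝ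
  | [] => 0
  | a :: l => 1 / ((a : ℝ) + cf l)

/-- Iterates of the Gauss map, starting from the fractional part of `x`. -/
def gaussIter (x : ℝ) : ℕ → ℝ
  | 0 => Int.fract x
  | n + 1 => Int.fract (1 / gaussIter x n)

/-- The `n`-th partial quotient `aₙ(x)` of the continued fraction expansion of `x`
(for `n ≥ 1`; a junk value is returned if it is undefined). -/
def pq (x : ℝ) (n : ℕ) : ℕ := ⌊1 / gaussIter x (n - 1)⌋₊

/-- The `n`-th partial quotient `aₙ(x)` of `x` is defined (`n ≥ 1`), i.e. `n` does not
exceed the length of the continued fraction expansion of `x`. -/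
def pqDefined (x : ℝ) (n : ℕ) : Prop := gaussIter x (n - 1) ≠ 0

/-- The set `G` of real numbers that are rational or whose partial quotients diverge. -/
def G : Set ℝ :=
  {x | (∃ q : ℚ, x = (q : ℝ)) ∨ Tendsto (fun n => pq x n) atTop atTop}

/-- The list of pairs `(b_k, c_k)`, `k = 1, …, n`, produced by (a totalized version of)
Shulga's algorithm applied to `α`. -/
def shulgaList (α : ℝ) : ℕ → List (ℕ × ℕ)
  | 0 => []
  | n + 1 =>
      let L := shulgaList α n
      let b := pq (α - cf (L.map Prod.snd)) (n + 1) + 1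
      let c := pq (α - cf (L.map Prod.fst ++ [b])) (n + 1)
      L ++ [(b, c)]

/-- The list `[b₁, …, bₙ]` of Shulga's algorithm applied to `α`. -/
def bList (α : ℝ) (n : ℕ) : List ℕ := (shulgaList α n).map Prod.fst

/-- The list `[c₁, …, cₙ]` of Shulga's algorithm applied to `α`. -/
def cList (α : ℝ) (n : ℕ) : List ℕ := (shulgaList α n).map Prod.snd

/-- `bₙ` of Shulga's algorithm applied to `α` (for `n ≥ 1`). -/
def shulgaB (α : ℝ) (n : ℕ) : ℕ := ((shulgaList α n).getLast?.getD (0, 0)).1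

/-- `cₙ` of Shulga's algorithm applied to `α` (for `n ≥ 1`). -/
def shulgaC (α : ℝ) (n : ℕ) : ℕ := ((shulgaList α n).getLast?.getD (0, 0)).2

/-- The first `n` steps of Shulga's algorithm applied to `α` are defined: for each step
`k + 1 ≤ n`, the partial quotients `a_{k+1}(α - [0;c₁,…,c_k])` and
`a_{k+1}(α - [0;b₁,…,b_{k+1}])` defining `b_{k+1}` and `c_{k+1}` exist
(in particular the algorithm has not stopped before step `n`). -/
def shulgaDefined (α : ℝ) (n : ℕ) : Prop :=
  ∀ k < n, pqDefined (α - cf (cList α k)) (k + 1) ∧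
    pqDefined (α - cf (bList α (k + 1))) (k + 1)

/-- The half-open interval whose included endpoint is `x` and excluded endpoint is `y`,
the smaller one being the left endpoint. -/
def hIco (x y : ℝ) : Set ℝ := if x ≤ y then Set.Ico x y else Set.Ioc y x

/-- The list `[a 1, …, a n]`. -/
def listOf (a : ℕ → ℕ) (n : ℕ) : List ℕ := (List.range n).map fun i => a (i + 1)

/-- The interval `B_k` determined by the digits `b`, `c` (`k ≥ 1`). -/
def Bset (b c : ℕ → ℕ) (k : ℕ) : Set ℝ :=
  hIco (cf (listOf b (k - 1) ++ [b k - 1]) + cf (listOf c (k - 1)))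
    (cf (listOf b k) + cf (listOf c (k - 1)))

/-- The interval `C_k` determined by the digits `b`, `c` (`k ≥ 1`). -/
def Cset (b c : ℕ → ℕ) (k : ℕ) : Set ℝ :=
  hIco (cf (listOf c k) + cf (listOf b k))
    (cf (listOf c (k - 1) ++ [c k + 1]) + cf (listOf b k))

/-- `A₀ = [0,1]` and `Aₙ = ⋂_{k=1}^{n} (B_k ∩ C_k)` for `n ≥ 1`. -/
def Aset (b c : ℕ → ℕ) : ℕ → Set ℝ
  | 0 => Set.Icc 0 1
  | n + 1 => ⋂ k ∈ Finset.Icc 1 (n + 1), (Bset b c k ∩ Cset b c k)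

/-- The denominators of the convergents of `[0; a 1, a 2, …]`:
`q₀ = 1`, `q₁ = a 1`, `q_k = a k * q_{k-1} + q_{k-2}`. -/
def qden (a : ℕ → ℕ) : ℕ → ℕ
  | 0 => 1
  | 1 => a 1
  | n + 2 => a (n + 2) * qden a (n + 1) + qden a n

/-!
Write `[0; l, x]` through the continuant matrix of `l`: its determinant `(-1)^|l|` turns every
difference of the endpoints involved into an explicit `±1/(q q')` with continuants `q, q'`, and
the sign `(-1)^|l|` tells which end of each interval is closed. Measured in the direction of that
sign, a common point of `B_{n-1}` and `C_{n-1}` puts the closed end of `C_{n-1}` less than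
`|C_{n-1}|` beyond the closed end of `B_{n-1}`, and a common point of `C_{n-1}` and `C_n` puts
their closed ends less than `|C_{n-1}| + |C_n|` apart. These two inequalities between reciprocals
of products of continuants rearrange into the bound on `bₙ`.
-/

/-- For `l = [a₁, …, aₙ]` this is `!![p_{n-1}, pₙ; q_{n-1}, qₙ]`, where `p_k / q_k` is the
`k`-th convergent of `[0; a₁, …, aₙ]`. -/
def contMat (l : List ℕ) : Matrix (Fin 2) (Fin 2) ℝ :=
  (l.map fun a => !![0, 1; 1, (a : ℝ)]).prod

lemma contMat_cons (a : ℕ) (l : List ℕ) :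
    contMat (a :: l) = !![0, 1; 1, (a : ℝ)] * contMat l :=
  rfl

lemma contMat_cons_apply_zero (a : ℕ) (l : List ℕ) (j : Fin 2) :
    contMat (a :: l) 0 j = contMat l 1 j := by
  simp [contMat_cons, Matrix.mul_apply, Fin.sum_univ_two]

lemma contMat_cons_apply_one (a : ℕ) (l : List ℕ) (j : Fin 2) :
    contMat (a :: l) 1 j = contMat l 0 j + a * contMat l 1 j := by
  simp [contMat_cons, Matrix.mul_apply, Fin.sum_univ_two]

lemma contMat_concat (l : List ℕ) (x : ℕ) :
    contMat (l ++ [x]) = contMat l * !![0, 1; 1, (x : ℝ)] := by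
  simp [contMat]

lemma contMat_concat_apply_zero (l : List ℕ) (x : ℕ) (i : Fin 2) :
    contMat (l ++ [x]) i 0 = contMat l i 1 := by
  simp [contMat_concat, Matrix.mul_apply, Fin.sum_univ_two]

lemma contMat_concat_apply_one (l : List ℕ) (x : ℕ) (i : Fin 2) :
    contMat (l ++ [x]) i 1 = contMat l i 0 + x * contMat l i 1 := by
  simp [contMat_concat, Matrix.mul_apply, Fin.sum_univ_two, mul_comm]

lemma contMat_concat_succ_one_one (l : List ℕ) (x : ℕ) :
    contMat (l ++ [x + 1]) 1 1 = contMat (l ++ [x]) 1 1 + contMat l 1 1 := by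
  simp only [contMat_concat_apply_one]
  push_cast
  ring

lemma contMat_concat_concat_one_one (l : List ℕ) (x y : ℕ) :
    contMat (l ++ [x] ++ [y]) 1 1 = contMat l 1 1 + y * contMat (l ++ [x]) 1 1 := by
  rw [contMat_concat_apply_one, contMat_concat_apply_zero]

lemma det_contMat (l : List ℕ) : (contMat l).det = (-1) ^ l.length := by
  induction l with
  | nil => simp [contMat]
  | cons a l ih =>
    rw [contMat_cons, Matrix.det_mul, ih, Matrix.det_fin_two_of, List.length_cons, pow_succ]
    ring

lemma neg_one_pow_mul_det_contMat (l : List ℕ) :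
    (-1) ^ l.length * (contMat l 0 0 * contMat l 1 1 - contMat l 0 1 * contMat l 1 0) = 1 := by
  rw [← Matrix.det_fin_two, det_contMat, ← mul_pow]
  norm_num

lemma contMat_reverse (l : List ℕ) : contMat l.reverse = (contMat l).transpose := by
  induction l with
  | nil => simp [contMat]
  | cons a l ih =>
    rw [List.reverse_cons, contMat_concat, ih, contMat_cons, Matrix.transpose_mul]
    congr 1
    ext i j
    fin_cases i <;> fin_cases j <;> rfl

lemma contMat_nonneg (l : List ℕ) (i j : Fin 2) : 0 ≤ contMat l i j := by
  induction l generalizing i with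
  | nil => fin_cases i <;> fin_cases j <;> simp [contMat]
  | cons a l ih =>
    fin_cases i
    · exact (contMat_cons_apply_zero a l j).symm ▸ ih 1
    · rw [Fin.mk_one, contMat_cons_apply_one]
      have := ih 0
      have := ih 1
      positivity

lemma forall_mem_concat_pos {l : List ℕ} (hl : ∀ a ∈ l, 0 < a) {x : ℕ} (hx : 0 < x) :
    ∀ a ∈ l ++ [x], 0 < a :=
  List.forall_mem_append.2 ⟨hl, by simpa⟩

lemma contMat_one_one_pos {l : List ℕ} (hl : ∀ a ∈ l, 0 < a) : 0 < contMat l 1 1 := by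
  induction l with
  | nil => simp [contMat]
  | cons a l ih =>
    have ha : (0 : ℝ) < a := by exact_mod_cast hl a List.mem_cons_self
    have := ih fun x hx => hl x (List.mem_cons_of_mem a hx)
    have := contMat_nonneg l 0 1
    rw [contMat_cons_apply_one]
    positivity

lemma one_div_contMat_mul_contMat_pos {l l' : List ℕ} (hl : ∀ a ∈ l, 0 < a)
    (hl' : ∀ a ∈ l', 0 < a) : 0 < 1 / (contMat l 1 1 * contMat l' 1 1) :=
  one_div_pos.2 (mul_pos (contMat_one_one_pos hl) (contMat_one_one_pos hl'))

lemma cf_eq_div {l : List ℕ} (hl : ∀ a ∈ l, 0 < a) :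
    cf l = contMat l 0 1 / contMat l 1 1 := by
  induction l with
  | nil => simp [cf, contMat]
  | cons a l ih =>
    have hl' : ∀ x ∈ l, 0 < x := fun x hx => hl x (List.mem_cons_of_mem a hx)
    have := contMat_one_one_pos hl'
    rw [cf, ih hl', contMat_cons_apply_zero, contMat_cons_apply_one]
    field_simp
    ring

lemma cf_reverse {l : List ℕ} (hl : ∀ a ∈ l, 0 < a) :
    cf l.reverse = contMat l 1 0 / contMat l 1 1 := by
  rw [cf_eq_div (by simpa using hl), contMat_reverse]
  rfl

section Concat

variable {l : List ℕ} (hl : ∀ a ∈ l, 0 < a) {x : ℕ} (hx : 0 < x)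
include hl hx

lemma neg_one_pow_mul_cf_concat_sub_cf :
    (-1) ^ l.length * (cf (l ++ [x]) - cf l) =
      1 / (contMat (l ++ [x]) 1 1 * contMat l 1 1) := by
  have hlx := forall_mem_concat_pos hl hx
  rw [cf_eq_div hl, cf_eq_div hlx, div_sub_div _ _ (contMat_one_one_pos hlx).ne'
    (contMat_one_one_pos hl).ne', ← mul_div_assoc]
  simp only [contMat_concat_apply_one]
  congr 1
  linear_combination neg_one_pow_mul_det_contMat l

lemma neg_one_pow_mul_cf_concat_sub_cf_concat_succ :
    (-1) ^ l.length * (cf (l ++ [x]) - cf (l ++ [x + 1])) =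
      1 / (contMat (l ++ [x]) 1 1 * contMat (l ++ [x + 1]) 1 1) := by
  have hlx := forall_mem_concat_pos hl hx
  have hlx' := forall_mem_concat_pos hl x.succ_pos
  rw [cf_eq_div hlx, cf_eq_div hlx', div_sub_div _ _ (contMat_one_one_pos hlx).ne'
    (contMat_one_one_pos hlx').ne', ← mul_div_assoc]
  simp only [contMat_concat_apply_one]
  congr 1
  push_cast
  linear_combination neg_one_pow_mul_det_contMat l

end Concat

lemma mem_hIco_sign {x y z ε : ℝ} (hz : z ∈ hIco x y) (hε : ε = 1 ∨ ε = -1)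
    (hxy : 0 < ε * (x - y)) : 0 ≤ ε * (x - z) ∧ ε * (x - z) < ε * (x - y) := by
  unfold hIco at hz
  rcases hε with rfl | rfl <;> split_ifs at hz <;>
    simp only [Set.mem_Ico, Set.mem_Ioc] at hz <;> constructor <;> linarith

lemma listOf_succ (a : ℕ → ℕ) (k : ℕ) : listOf a (k + 1) = listOf a k ++ [a (k + 1)] := by
  simp [listOf, List.range_succ]

lemma listOf_pos {a : ℕ → ℕ} {n : ℕ} (h : ∀ i, 1 ≤ i → i ≤ n → 0 < a i) :
    ∀ x ∈ listOf a n, 0 < x := by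
  simp only [listOf, List.mem_map, List.mem_range]
  rintro _ ⟨i, hi, rfl⟩
  exact h (i + 1) (by omega) (by omega)

section Intervals

variable {Lb Lc : List ℕ} (hlen : Lc.length = Lb.length) (hLb : ∀ a ∈ Lb, 0 < a)
  (hLc : ∀ a ∈ Lc, 0 < a) {β γ : ℕ} (hγ : 0 < γ) {z : ℝ}
include hlen hLb hLc hγ

lemma gap_lt_of_mem_B_C (hβ : 2 ≤ β)
    (hB : z ∈ hIco (cf (Lb ++ [β - 1]) + cf Lc) (cf (Lb ++ [β]) + cf Lc))
    (hC : z ∈ hIco (cf (Lc ++ [γ]) + cf (Lb ++ [β])) (cf (Lc ++ [γ + 1]) + cf (Lb ++ [β]))) :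
    1 / (contMat (Lc ++ [γ]) 1 1 * contMat Lc 1 1) -
        1 / (contMat (Lb ++ [β - 1]) 1 1 * contMat (Lb ++ [β]) 1 1) <
      1 / (contMat (Lc ++ [γ]) 1 1 * contMat (Lc ++ [γ + 1]) 1 1) := by
  have hβ₁ : 0 < β - 1 := by omega
  have lenB := neg_one_pow_mul_cf_concat_sub_cf_concat_succ hLb hβ₁
  have lenC := neg_one_pow_mul_cf_concat_sub_cf_concat_succ hLc hγ
  have gapC := neg_one_pow_mul_cf_concat_sub_cf hLc hγ
  rw [Nat.sub_add_cancel (by omega : 1 ≤ β)] at lenB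
  rw [hlen] at lenC gapC
  obtain ⟨hB₀, -⟩ := mem_hIco_sign hB (neg_one_pow_eq_or ℝ _) (by
    rw [add_sub_add_right_eq_sub, lenB]
    exact one_div_contMat_mul_contMat_pos (forall_mem_concat_pos hLb hβ₁)
      (forall_mem_concat_pos hLb (by omega)))
  obtain ⟨-, hC₁⟩ := mem_hIco_sign hC (neg_one_pow_eq_or ℝ _) (by
    rw [add_sub_add_right_eq_sub, lenC]
    exact one_div_contMat_mul_contMat_pos (forall_mem_concat_pos hLc hγ)
      (forall_mem_concat_pos hLc γ.succ_pos))
  rw [add_sub_add_right_eq_sub, lenC] at hC₁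
  linarith

lemma gap_lt_of_mem_C_C {β' γ' : ℕ} (hβ : 0 < β) (hβ' : 0 < β') (hγ' : 0 < γ')
    (hC : z ∈ hIco (cf (Lc ++ [γ]) + cf (Lb ++ [β])) (cf (Lc ++ [γ + 1]) + cf (Lb ++ [β])))
    (hN : z ∈ hIco (cf (Lc ++ [γ] ++ [γ']) + cf (Lb ++ [β] ++ [β']))
      (cf (Lc ++ [γ] ++ [γ' + 1]) + cf (Lb ++ [β] ++ [β']))) :
    1 / (contMat (Lc ++ [γ] ++ [γ']) 1 1 * contMat (Lc ++ [γ]) 1 1) +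
        1 / (contMat (Lb ++ [β] ++ [β']) 1 1 * contMat (Lb ++ [β]) 1 1) <
      1 / (contMat (Lc ++ [γ]) 1 1 * contMat (Lc ++ [γ + 1]) 1 1) +
        1 / (contMat (Lc ++ [γ] ++ [γ']) 1 1 * contMat (Lc ++ [γ] ++ [γ' + 1]) 1 1) := by
  have hLb' := forall_mem_concat_pos hLb hβ
  have hLc' := forall_mem_concat_pos hLc hγ
  have lenC := neg_one_pow_mul_cf_concat_sub_cf_concat_succ hLc hγ
  have lenN := neg_one_pow_mul_cf_concat_sub_cf_concat_succ hLc' hγ'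
  have gapN := neg_one_pow_mul_cf_concat_sub_cf hLc' hγ'
  have gapB := neg_one_pow_mul_cf_concat_sub_cf hLb' hβ'
  simp only [List.length_append, List.length_singleton, pow_succ, hlen] at lenC lenN gapN gapB
  obtain ⟨-, hC₁⟩ := mem_hIco_sign hC (neg_one_pow_eq_or ℝ _) (by
    rw [add_sub_add_right_eq_sub, lenC]
    exact one_div_contMat_mul_contMat_pos hLc' (forall_mem_concat_pos hLc γ.succ_pos))
  obtain ⟨-, hN₁⟩ := mem_hIco_sign hN (neg_one_pow_eq_or ℝ (Lb.length + 1)) (by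
    rw [add_sub_add_right_eq_sub, pow_succ, lenN]
    exact one_div_contMat_mul_contMat_pos (forall_mem_concat_pos hLc' hγ')
      (forall_mem_concat_pos hLc' γ'.succ_pos))
  rw [add_sub_add_right_eq_sub, lenC] at hC₁
  rw [add_sub_add_right_eq_sub, pow_succ, lenN] at hN₁
  linarith

end Intervals

lemma bound_of_gaps {QL q QM s b c : ℝ} (hQL : 0 < QL) (hq : QL < q) (hQM : 0 < QM)
    (hs : 0 < s) (hb : 0 ≤ b) (hc : 0 < c)
    (h₁ : 1 / (s * QM) - 1 / ((q - QL) * q) < 1 / (s * (s + QM)))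
    (h₂ : 1 / ((QM + c * s) * s) + 1 / ((QL + b * q) * q) <
      1 / (s * (s + QM)) + 1 / ((QM + c * s) * (QM + c * s + s))) :
    (1 + 1 / c) * ((s + QM) / QM) * (1 - QL / q) - 1 < b := by
  have hq0 : 0 < q := hQL.trans hq
  have hqQL : 0 < q - QL := sub_pos.2 hq
  have i₁ : (q - QL) * q < QM * (s + QM) := by
    have : 1 / (s * QM) - 1 / (s * (s + QM)) = 1 / (QM * (s + QM)) := by field_simp; ring
    have : 1 / (QM * (s + QM)) < 1 / ((q - QL) * q) := by linarith
    exact (one_div_lt_one_div (by positivity) (by positivity)).1 this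
  have i₂ : (QM + c * s + s) * (s + QM) < c * ((QL + b * q) * q) := by
    have : 1 / (s * (s + QM)) + 1 / ((QM + c * s) * (QM + c * s + s)) -
        1 / ((QM + c * s) * s) = c / ((s + QM) * (QM + c * s + s)) := by
      field_simp
      ring
    have : 1 / ((QL + b * q) * q) < c / ((s + QM) * (QM + c * s + s)) := by linarith
    rw [div_lt_div_iff₀ (by positivity) (by positivity)] at this
    linarith
  have key : (c + 1) * (s + QM) * (q - QL) * q < (b + 1) * (c * QM * q) * q := by
    linear_combination QM * i₂ + ((c + 1) * s + QM) * i₁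
  have : (1 + 1 / c) * ((s + QM) / QM) * (1 - QL / q) =
      (c + 1) * (s + QM) * (q - QL) / (c * QM * q) := by
    field_simp
  rw [this, sub_lt_iff_lt_add, div_lt_iff₀ (by positivity)]
  exact lt_of_mul_lt_mul_right key hq0.le

theorem lt_of_mem_B_C_C {Lb Lc : List ℕ} (hlen : Lc.length = Lb.length)
    (hLb : ∀ a ∈ Lb, 0 < a) (hLc : ∀ a ∈ Lc, 0 < a) {β β' γ γ' : ℕ} (hβ : 2 ≤ β)
    (hβ' : 0 < β') (hγ : 0 < γ) (hγ' : 0 < γ') {z : ℝ}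
    (hB : z ∈ hIco (cf (Lb ++ [β - 1]) + cf Lc) (cf (Lb ++ [β]) + cf Lc))
    (hC : z ∈ hIco (cf (Lc ++ [γ]) + cf (Lb ++ [β])) (cf (Lc ++ [γ + 1]) + cf (Lb ++ [β])))
    (hN : z ∈ hIco (cf (Lc ++ [γ] ++ [γ']) + cf (Lb ++ [β] ++ [β']))
      (cf (Lc ++ [γ] ++ [γ' + 1]) + cf (Lb ++ [β] ++ [β']))) :
    (1 + 1 / (γ' : ℝ)) * (γ + 1 + cf Lc.reverse) * (1 - cf (Lb ++ [β]).reverse) - 1 < β' := by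
  have h₁ := gap_lt_of_mem_B_C hlen hLb hLc hγ hβ hB hC
  have h₂ := gap_lt_of_mem_C_C hlen hLb hLc hγ (by omega) hβ' hγ' hC hN
  have hq : contMat (Lb ++ [β - 1]) 1 1 = contMat (Lb ++ [β]) 1 1 - contMat Lb 1 1 := by
    have := contMat_concat_succ_one_one Lb (β - 1)
    rw [Nat.sub_add_cancel (by omega : 1 ≤ β)] at this
    linarith
  have hs : contMat (Lc ++ [γ]) 1 1 = contMat Lc 1 0 + γ * contMat Lc 1 1 :=
    contMat_concat_apply_one Lc γ 1
  have hQM := contMat_one_one_pos hLc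
  rw [cf_reverse hLc, cf_reverse (forall_mem_concat_pos hLb (by omega)),
    contMat_concat_apply_zero,
    show (γ : ℝ) + 1 + contMat Lc 1 0 / contMat Lc 1 1 =
      (contMat (Lc ++ [γ]) 1 1 + contMat Lc 1 1) / contMat Lc 1 1 by
        rw [hs]; field_simp; ring]
  simp only [hq, contMat_concat_succ_one_one, contMat_concat_concat_one_one] at h₁ h₂
  refine bound_of_gaps (contMat_one_one_pos hLb) ?_ hQM
    (contMat_one_one_pos (forall_mem_concat_pos hLc hγ)) β'.cast_nonneg
    (by exact_mod_cast hγ') h₁ h₂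
  linarith [hq ▸ contMat_one_one_pos (forall_mem_concat_pos hLb (by omega : 0 < β - 1))]

/-- if `B_{n−1} ∩ Cₙ ∩ C_{n−1} ≠ ∅` then
`bₙ > (1 + 1/cₙ)(c_{n−1} + 1 + [0;c_{n−2},…,c₁])(1 − [0;b_{n−1},…,b₁]) − 1`. -/
theorem stmt15 (n : ℕ) (hn : 2 ≤ n) (b c : ℕ → ℕ)
    (hb : ∀ k : ℕ, 1 ≤ k → k ≤ n → 2 ≤ b k) (hc : ∀ k : ℕ, 1 ≤ k → k ≤ n → 1 ≤ c k)
    (h : (Bset b c (n - 1) ∩ Cset b c n ∩ Cset b c (n - 1)).Nonempty) :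
    (b n : ℝ) > (1 + 1 / (c n : ℝ)) *
      ((c (n - 1) : ℝ) + 1 + cf (listOf c (n - 2)).reverse) *
      (1 - cf (listOf b (n - 1)).reverse) - 1 := by
  obtain ⟨k, rfl⟩ : ∃ k, n = k + 2 := ⟨n - 2, by omega⟩
  obtain ⟨z, ⟨hB, hN⟩, hC⟩ := h
  simp only [Bset, Cset, Nat.add_sub_cancel, show k + 2 - 1 = k + 1 from rfl, listOf_succ]
    at hB hC hN ⊢
  exact lt_of_mem_B_C_C (by simp [listOf])
    (listOf_pos fun i hi _ => by have := hb i hi (by omega); omega)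
    (listOf_pos fun i hi _ => hc i hi (by omega)) (hb _ (by omega) (by omega))
    (by have := hb (k + 2) (by omega) le_rfl; omega) (hc _ (by omega) (by omega))
    (hc _ (by omega) le_rfl) hB hC hN

end ShulgaPaper
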